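/- arXiv:1106.5294 — 15 statements merged into one kernel-verified Lean document; each statement's English description precedes it below -/
import Mathlib

section
/- If X and Y are well-quasi-orders on the same underlying set with finite order types otp(X) and otp(Y), then the intersection quasi-order X ∩ Y is a wqo and otp(X ∩ Y) < R(otp(X)+1, otp(Y)+1), where R is the two-color Ramsey number. -/
/-- A well-quasi-order: no infinite bad sequence. -/
def IsWqo {X : Type*} (r : X → X → Prop) : Prop :=
  ¬ ∃ t : ℕ → X, ∀ i j : ℕ, i < j → ¬ r (t i) (t j)

/-- A finite bad sequence of length `n`. -/
def IsBadFin {X : Type*} (r : X → X → Prop) {n : ℕ} (t : Fin n → X) : Prop :=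
  ∀ i j : Fin n, i < j → ¬ r (t i) (t j)

/-- `k` has the Ramsey property for `(a, b)`: every red/black coloring of the edges of the
complete graph on `k` vertices contains a red clique of size `a` or a black clique of size `b`. -/
def RamseyProp (k a b : ℕ) : Prop :=
  ∀ c : ℕ → ℕ → Bool,
    (∃ s : Finset ℕ, s ⊆ Finset.range k ∧ s.card = a ∧
      ∀ i ∈ s, ∀ j ∈ s, i < j → c i j = true) ∨
    (∃ s : Finset ℕ, s ⊆ Finset.range k ∧ s.card = b ∧
      ∀ i ∈ s, ∀ j ∈ s, i < j → c i j = false)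

/-- The (two-color) Ramsey number. -/
noncomputable def ramseyNumber (a b : ℕ) : ℕ :=
  sInf {k : ℕ | RamseyProp k a b}

lemma ramAux (a b : ℕ) : ∃ n : ℕ, ∀ V : Finset ℕ, n ≤ V.card → ∀ c : ℕ → ℕ → Bool,
    (∃ s : Finset ℕ, s ⊆ V ∧ s.card = a ∧ ∀ i ∈ s, ∀ j ∈ s, i < j → c i j = true) ∨
    (∃ s : Finset ℕ, s ⊆ V ∧ s.card = b ∧ ∀ i ∈ s, ∀ j ∈ s, i < j → c i j = false) := by
  classical
  induction a generalizing b with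
  | zero => exact ⟨0, fun V _ c => Or.inl ⟨∅, by simp⟩⟩
  | succ a iha =>
    induction b with
    | zero => exact ⟨0, fun V _ c => Or.inr ⟨∅, by simp⟩⟩
    | succ b ihb =>
      obtain ⟨n1, h1⟩ := iha (b + 1)
      obtain ⟨n2, h2⟩ := ihb
      refine ⟨n1 + n2 + 1, fun V hV c => ?_⟩
      have hne : V.Nonempty := Finset.card_pos.mp (by omega)
      set v := V.min' hne with hv
      have hvV : v ∈ V := V.min'_mem hne
      set W := V.erase v with hW
      have hWcard : V.card - 1 ≤ W.card := by
        rw [hW, Finset.card_erase_of_mem hvV]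
      have hvlt : ∀ j ∈ W, v < j := fun j hj =>
        lt_of_le_of_ne (V.min'_le j (Finset.mem_of_mem_erase hj))
          (Ne.symm (Finset.ne_of_mem_erase hj))
      set Rv := W.filter (fun j => c v j = true) with hRv
      set Bv := W.filter (fun j => c v j = false) with hBv
      have hcards : Rv.card + Bv.card = W.card := by
        rw [hRv, hBv]
        have := Finset.card_filter_add_card_filter_not
          (s := W) (p := fun j => c v j = true)
        simpa [Bool.not_eq_true] using this
      have hRW : Rv ⊆ W := Finset.filter_subset _ _
      have hBW : Bv ⊆ W := Finset.filter_subset _ _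
      have hWV : W ⊆ V := Finset.erase_subset _ _
      have hcase : n1 ≤ Rv.card ∨ n2 ≤ Bv.card := by omega
      rcases hcase with hcase | hcase
      · rcases h1 Rv hcase c with ⟨u, hu, hcard, hhom⟩ | ⟨u, hu, hcard, hhom⟩
        · -- red clique of size a in Rv: add v
          left
          have hvnotu : v ∉ u := fun hmem =>
            (Finset.ne_of_mem_erase (hRW (hu hmem))) rfl
          refine ⟨insert v u, ?_, ?_, ?_⟩
          · exact Finset.insert_subset hvV ((hu.trans hRW).trans hWV)
          · rw [Finset.card_insert_of_notMem hvnotu, hcard]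
          · intro i hi j hj hij
            rcases Finset.mem_insert.mp hi with hi | hi
            · rcases Finset.mem_insert.mp hj with hj | hj
              · omega
              · subst hi
                have := hu hj
                rw [hRv, Finset.mem_filter] at this
                exact this.2
            · rcases Finset.mem_insert.mp hj with hj | hj
              · exfalso
                subst hj
                exact absurd (hvlt i (hRW (hu hi))) (by omega)
              · exact hhom i hi j hj hij
        · exact Or.inr ⟨u, (hu.trans hRW).trans hWV, hcard, hhom⟩
      · rcases h2 Bv hcase c with ⟨u, hu, hcard, hhom⟩ | ⟨u, hu, hcard, hhom⟩
        · exact Or.inl ⟨u, (hu.trans hBW).trans hWV, hcard, hhom⟩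
        · -- black clique of size b in Bv: add v
          right
          have hvnotu : v ∉ u := fun hmem =>
            (Finset.ne_of_mem_erase (hBW (hu hmem))) rfl
          refine ⟨insert v u, ?_, ?_, ?_⟩
          · exact Finset.insert_subset hvV ((hu.trans hBW).trans hWV)
          · rw [Finset.card_insert_of_notMem hvnotu, hcard]
          · intro i hi j hj hij
            rcases Finset.mem_insert.mp hi with hi | hi
            · rcases Finset.mem_insert.mp hj with hj | hj
              · omega
              · subst hi
                have := hu hj
                rw [hBv, Finset.mem_filter] at this
                exact this.2
            · rcases Finset.mem_insert.mp hj with hj | hj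
              · exfalso
                subst hj
                exact absurd (hvlt i (hBW (hu hi))) (by omega)
              · exact hhom i hi j hj hij

lemma ramseyNumber_mem (a b : ℕ) : RamseyProp (ramseyNumber a b) a b := by
  obtain ⟨n, hn⟩ := ramAux a b
  have hne : {k : ℕ | RamseyProp k a b}.Nonempty := by
    refine ⟨n, fun c => ?_⟩
    simpa using hn (Finset.range n) (by simp) c
  exact Nat.sInf_mem hne

theorem stmt3 {S : Type*} (r s : S → S → Prop)
    (hrrefl : ∀ x, r x x) (hrtrans : ∀ x y z, r x y → r y z → r x z)
    (hsrefl : ∀ x, s x x) (hstrans : ∀ x y z, s x y → s y z → s x z)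
    (hr : IsWqo r) (hs : IsWqo s) (a b : ℕ)
    -- `otp(X) = a` (finite): `a` is the maximal length of a bad sequence of `r`
    (haEx : ∃ t : Fin a → S, IsBadFin r t)
    (haMax : ∀ t : Fin (a + 1) → S, ¬ IsBadFin r t)
    -- `otp(Y) = b` (finite): `b` is the maximal length of a bad sequence of `s`
    (hbEx : ∃ t : Fin b → S, IsBadFin s t)
    (hbMax : ∀ t : Fin (b + 1) → S, ¬ IsBadFin s t) :
    IsWqo (fun x y => r x y ∧ s x y) ∧
      ∀ t : Fin (ramseyNumber (a + 1) (b + 1)) → S,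
        ¬ IsBadFin (fun x y => r x y ∧ s x y) t := by
  classical
  set k := ramseyNumber (a + 1) (b + 1) with hk
  have hkmem : RamseyProp k (a + 1) (b + 1) := ramseyNumber_mem (a + 1) (b + 1)
  have key : ∀ t : Fin k → S, ¬ IsBadFin (fun x y => r x y ∧ s x y) t := by
    intro t hbad
    set c : ℕ → ℕ → Bool := fun i j =>
      if h : i < k ∧ j < k then !(decide (r (t ⟨i, h.1⟩) (t ⟨j, h.2⟩))) else true with hc
    rcases hkmem c with ⟨u, hu, hcard, hhom⟩ | ⟨u, hu, hcard, hhom⟩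
    · -- red clique of size a+1: bad sequence for r
      set e := u.orderEmbOfFin hcard with he
      have hemem : ∀ i, (e i : ℕ) ∈ u := fun i => u.orderEmbOfFin_mem hcard i
      have hek : ∀ i, (e i : ℕ) < k := fun i => Finset.mem_range.mp (hu (hemem i))
      refine haMax (fun i => t ⟨e i, hek i⟩) ?_
      intro i j hij hrij
      have h1 : c (e i) (e j) = true :=
        hhom (e i) (hemem i) (e j) (hemem j) (e.strictMono hij)
      rw [hc] at h1
      simp only [dif_pos (And.intro (hek i) (hek j))] at h1
      simp only [Bool.not_eq_true', decide_eq_false_iff_not] at h1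
      exact h1 hrij
    · -- black clique of size b+1: bad sequence for s
      set e := u.orderEmbOfFin hcard with he
      have hemem : ∀ i, (e i : ℕ) ∈ u := fun i => u.orderEmbOfFin_mem hcard i
      have hek : ∀ i, (e i : ℕ) < k := fun i => Finset.mem_range.mp (hu (hemem i))
      refine hbMax (fun i => t ⟨e i, hek i⟩) ?_
      intro i j hij hsij
      have h1 : c (e i) (e j) = false :=
        hhom (e i) (hemem i) (e j) (hemem j) (e.strictMono hij)
      rw [hc] at h1
      simp only [dif_pos (And.intro (hek i) (hek j))] at h1
      simp only [Bool.not_eq_false', decide_eq_true_eq] at h1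
      have hlt : (⟨e i, hek i⟩ : Fin k) < ⟨e j, hek j⟩ := e.strictMono hij
      exact hbad _ _ hlt ⟨h1, hsij⟩
  refine ⟨?_, key⟩
  rintro ⟨t, ht⟩
  exact key (fun i => t i) (fun i j hij => ht i j hij)
end

section
/- If a set system M over a set U has finite elasticity, then the set system !M = { [M]^{<ω} : M ∈ M } over the finite subsets of U also has finite elasticity. -/
/-- A set system has finite elasticity if it has no infinite elasticity. -/
def FiniteElasticity {X : Type*} (𝓛 : Set (Set X)) : Prop :=
  ¬ ∃ (t : ℕ → X) (L : ℕ → Set X),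
      (∀ i, L i ∈ 𝓛) ∧ (∀ i j, j ≤ i → t j ∈ L i) ∧ (∀ i, t (i + 1) ∉ L i)

theorem stmt4 {U : Type*} (𝓜 : Set (Set U)) (h : FiniteElasticity 𝓜) :
    FiniteElasticity {S : Set (Finset U) | ∃ M ∈ 𝓜, S = {v : Finset U | ↑v ⊆ M}} := by
  rintro ⟨t, L, hL, ht, hnt⟩
  apply h
  choose M hM hLM using hL
  have key : ∀ i, ∃ x, x ∈ (t (i + 1) : Set U) ∧ x ∉ M i := by
    intro i
    have hn := hnt i
    rw [hLM i] at hn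
    simp only [Set.mem_setOf_eq] at hn
    obtain ⟨x, hx1, hx2⟩ := Set.not_subset.mp hn
    exact ⟨x, hx1, hx2⟩
  choose s hs hns using key
  refine ⟨s, fun i => M (i + 1), fun i => hM _, ?_, fun i => hns (i + 1)⟩
  intro i j hj
  have h1 : t (j + 1) ∈ L (i + 1) := ht (i + 1) (j + 1) (by omega)
  rw [hLM (i + 1)] at h1
  exact h1 (hs j)
end

section
/- Let M be a set system over U with finite elasticity and let R ⊆ S × [U]^{<ω} be a relation such that {v : R(s,v)} is finite for each s ∈ S. Then the set system { R⁻¹[[M]] : M ∈ M } over S, where R⁻¹[[M]] = { s : ∃ v ⊆ M finite, R(s,v) }, has finite elasticity. -/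
theorem stmt5 {S U : Type*} (𝓜 : Set (Set U)) (R : S → Finset U → Prop)
    (hfin : ∀ s : S, {v : Finset U | R s v}.Finite)
    (h : FiniteElasticity 𝓜) :
    FiniteElasticity
      {L : Set S | ∃ M ∈ 𝓜, L = {s : S | ∃ v : Finset U, ↑v ⊆ M ∧ R s v}} := by
  classical
  rintro ⟨t, L, hLmem, hin, hout⟩
  choose M hM hLeq using hLmem
  have hex : ∀ i j, j ≤ i → ∃ v : Finset U, ↑v ⊆ M i ∧ R (t j) v := by
    intro i j hji
    have := hin i j hji
    rwa [hLeq i] at this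
  set σ : ℕ → ℕ → Finset U := fun i j =>
    if h : ∃ v : Finset U, ↑v ⊆ M i ∧ R (t j) v then h.choose else ∅ with hσdef
  have hσ1 : ∀ i j, j ≤ i → ↑(σ i j) ⊆ M i ∧ R (t j) (σ i j) := by
    intro i j hji
    have hx := hex i j hji
    simp only [hσdef, dif_pos hx]
    exact hx.choose_spec
  set 𝒰 : Ultrafilter ℕ := Filter.hyperfilter ℕ with h𝒰
  have hcof : ∀ j : ℕ, {i : ℕ | j ≤ i} ∈ 𝒰 := by
    intro j
    apply Filter.hyperfilter_le_cofinite
    rw [Filter.mem_cofinite]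
    have : {i : ℕ | j ≤ i}ᶜ = Set.Iio j := by
      ext x; simp [Set.mem_Iio, not_le]
    rw [this]
    exact Set.finite_Iio j
  -- stabilize the witnesses along the ultrafilter
  have hw : ∀ j : ℕ, ∃ w : Finset U, R (t j) w ∧ {i : ℕ | σ i j = w} ∈ 𝒰 := by
    intro j
    have hmemV : {i : ℕ | σ i j ∈ {v : Finset U | R (t j) v}} ∈ 𝒰 := by
      filter_upwards [hcof j] with i hi
      exact (hσ1 i j hi).2
    have hmap : {v : Finset U | R (t j) v} ∈ (𝒰.map (fun i => σ i j)) := hmemV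
    obtain ⟨w, hwV, hpure⟩ := Ultrafilter.eq_pure_of_finite_mem (hfin (t j)) hmap
    refine ⟨w, hwV, ?_⟩
    have : {w} ∈ (𝒰.map (fun i => σ i j) : Filter (Finset U)) := by
      rw [hpure]; exact Filter.mem_pure.mpr rfl
    have : (fun i => σ i j) ⁻¹' {w} ∈ 𝒰 := this
    simpa [Set.preimage, Set.mem_singleton_iff] using this
  choose w hwR hwU using hw
  -- good index sets
  have hT : ∀ n : ℕ, ∃ i : ℕ, n ≤ i ∧ ∀ j < n, σ i j = w j := by
    intro n
    have hI : {i : ℕ | n ≤ i ∧ ∀ j < n, σ i j = w j} ∈ 𝒰 := by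
      have h2 : {i : ℕ | ∀ j < n, σ i j = w j} ∈ 𝒰 := by
        have : {i : ℕ | ∀ j < n, σ i j = w j} =
            ⋂ j ∈ Finset.range n, {i : ℕ | σ i j = w j} := by
          ext i; simp [Finset.mem_range]
        rw [this]
        exact (Filter.biInter_finset_mem _).mpr fun j _ => hwU j
      filter_upwards [hcof n, h2] with i h1 h2
      exact ⟨h1, h2⟩
    exact Filter.nonempty_of_mem hI
  choose pick hpick1 hpick2 using hT
  -- the increasing index sequence
  let a : ℕ → ℕ := fun r => Nat.rec (pick 0) (fun _ prev => pick (prev + 2)) r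
  have ha_succ : ∀ r, a (r + 1) = pick (a r + 2) := fun r => rfl
  have ha_gap : ∀ r, a r + 2 ≤ a (r + 1) := by
    intro r; rw [ha_succ r]; exact hpick1 (a r + 2)
  have ha_mono : StrictMono a := by
    apply strictMono_nat_of_lt_succ
    intro r
    have := ha_gap r; omega
  have ha_sub : ∀ r j, j ≤ a r + 1 → σ (a (r + 1)) j = w j := by
    intro r j hj
    rw [ha_succ r]
    exact hpick2 (a r + 2) j (by omega)
  have hwsub : ∀ r j, j ≤ a r + 1 → ↑(w j) ⊆ M (a (r + 1)) := by
    intro r j hj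
    have h1 := ha_sub r j hj
    have h2 : j ≤ a (r + 1) := le_trans (by omega : j ≤ a r + 2) (ha_gap r)
    have := (hσ1 (a (r + 1)) j h2).1
    rwa [h1] at this
  -- pick the escaping elements
  have hu : ∀ r : ℕ, ∃ u : U, u ∈ w (a r + 1) ∧ u ∉ M (a r) := by
    intro r
    have hno := hout (a r)
    rw [hLeq (a r)] at hno
    have hns : ¬ (↑(w (a r + 1)) : Set U) ⊆ M (a r) := by
      intro hsub
      exact hno ⟨w (a r + 1), hsub, hwR (a r + 1)⟩
    obtain ⟨u, hu1, hu2⟩ := Set.not_subset.mp hns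
    exact ⟨u, hu1, hu2⟩
  choose u hu1 hu2 using hu
  -- final contradiction with finite elasticity of 𝓜
  apply h
  refine ⟨u, fun r => M (a (r + 1)), fun r => hM _, ?_, ?_⟩
  · intro i j hji
    have : a j + 1 ≤ a i + 1 := by
      have := ha_mono.monotone hji; omega
    exact hwsub i (a j + 1) this (hu1 j)
  · intro i
    exact hu2 (i + 1)
end

section
/- Let M be a set system over Y with finite elasticity and let R ⊆ X × Y be a finitely branching relation (each x has only finitely many R-successors). Then the set system { R⁻¹[M] : M ∈ M } over X, where R⁻¹[M] = { x : ∃ y ∈ M, R(x,y) }, has finite elasticity. -/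
/-- Pigeonhole: if every element of an infinite set of naturals picks a witness from a
fixed finite set, some witness is picked by infinitely many. -/
lemma pigeon_aux {Y : Type*} {S : Set Y} (hS : S.Finite) {I : Set ℕ} (hI : I.Infinite)
    {P : ℕ → Y → Prop} (h : ∀ i ∈ I, ∃ y ∈ S, P i y) :
    ∃ y ∈ S, {i ∈ I | P i y}.Infinite := by
  by_contra hc
  push_neg at hc
  have hsub : I ⊆ ⋃ y ∈ S, {i ∈ I | P i y} := by
    intro i hi
    obtain ⟨y, hy, hP⟩ := h i hi
    exact Set.mem_biUnion hy ⟨hi, hP⟩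
  exact hI ((hS.biUnion hc).subset hsub)

theorem stmt6 {X Y : Type*} (𝓜 : Set (Set Y)) (R : X → Y → Prop)
    (hfin : ∀ x : X, {y : Y | R x y}.Finite)
    (h : FiniteElasticity 𝓜) :
    FiniteElasticity {L : Set X | ∃ M ∈ 𝓜, L = {x : X | ∃ y ∈ M, R x y}} := by
  rintro ⟨t, L, hL, hmem, hnot⟩
  choose M hM hLM using hL
  have A : ∀ i j, j ≤ i → ∃ y ∈ M i, R (t j) y := by
    intro i j hji
    have := hmem i j hji
    rw [hLM i] at this
    exact this
  have B : ∀ i y, R (t (i + 1)) y → y ∉ M i := by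
    intro i y hR hy
    exact hnot i (by rw [hLM i]; exact ⟨y, hy, hR⟩)
  -- state: a current index m and an infinite set I of "live" future indices with m ∈ I
  have step : ∀ q : {q : ℕ × Set ℕ // q.2.Infinite ∧ q.1 ∈ q.2},
      ∃ (s' : Y) (q' : {q : ℕ × Set ℕ // q.2.Infinite ∧ q.1 ∈ q.2}),
        q'.1.2 ⊆ q.1.2 ∧ q.1.1 < q'.1.1 ∧ (∀ i ∈ q'.1.2, s' ∈ M i) ∧ s' ∉ M q.1.1 := by
    rintro ⟨⟨m, I⟩, hIinf, hmI⟩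
    have hI1 : {i ∈ I | m < i}.Infinite := by
      have : (I \ Set.Iic m).Infinite := hIinf.diff (Set.finite_Iic m)
      refine this.mono ?_
      intro i hi
      exact ⟨hi.1, lt_of_not_ge hi.2⟩
    have hwit : ∀ i ∈ {i ∈ I | m < i}, ∃ y ∈ {y : Y | R (t (m + 1)) y}, y ∈ M i := by
      rintro i ⟨_, hmi⟩
      obtain ⟨y, hyM, hyR⟩ := A i (m + 1) hmi
      exact ⟨y, hyR, hyM⟩
    obtain ⟨s', hs'R, hJinf⟩ := pigeon_aux (hfin (t (m + 1))) hI1 hwit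
    obtain ⟨m', hm'⟩ := hJinf.nonempty
    refine ⟨s', ⟨(m', {i ∈ {i ∈ I | m < i} | s' ∈ M i}), hJinf, hm'⟩,
      ?_, hm'.1.2, ?_, B m s' hs'R⟩
    · intro i hi; exact hi.1.1
    · intro i hi; exact hi.2
  choose f g hsub hlt hmemM hnotM using step
  -- base state
  have hwit0 : ∀ i ∈ (Set.univ : Set ℕ), ∃ y ∈ {y : Y | R (t 0) y}, y ∈ M i := by
    intro i _
    obtain ⟨y, hyM, hyR⟩ := A i 0 (Nat.zero_le i)
    exact ⟨y, hyR, hyM⟩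
  obtain ⟨s0, _, hI0inf⟩ := pigeon_aux (hfin (t 0)) Set.infinite_univ hwit0
  obtain ⟨m0, hm0⟩ := hI0inf.nonempty
  set q0 : {q : ℕ × Set ℕ // q.2.Infinite ∧ q.1 ∈ q.2} :=
    ⟨(m0, {i ∈ Set.univ | s0 ∈ M i}), hI0inf, hm0⟩ with hq0
  set q : ℕ → {q : ℕ × Set ℕ // q.2.Infinite ∧ q.1 ∈ q.2} :=
    fun n => Nat.rec q0 (fun _ p => g p) n with hq
  have hqsucc : ∀ k, q (k + 1) = g (q k) := fun k => rfl
  set s : ℕ → Y := fun n => Nat.rec s0 (fun k _ => f (q k)) n with hs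
  have hssucc : ∀ k, s (k + 1) = f (q k) := fun k => rfl
  -- I is decreasing along the chain
  have hchain : ∀ j k, j ≤ k → (q k).1.2 ⊆ (q j).1.2 := by
    intro j k hjk
    induction k with
    | zero => simp_all
    | succ n ih =>
      rcases Nat.lt_or_ge j (n + 1) with hlt' | hge
      · exact (hsub (q n)).trans (ih (Nat.lt_succ_iff.mp hlt'))
      · have : j = n + 1 := le_antisymm hjk hge
        subst this; exact subset_rfl
  -- membership of s j in M ((q k).1.1) for j ≤ k
  have hsmem : ∀ k j, j ≤ k → s j ∈ M ((q k).1.1) := by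
    intro k j hjk
    have hqk : (q k).1.1 ∈ (q k).1.2 := (q k).2.2
    cases j with
    | zero =>
      have : (q k).1.1 ∈ (q 0).1.2 := hchain 0 k (Nat.zero_le k) hqk
      exact this.2
    | succ j' =>
      have : (q k).1.1 ∈ (q (j' + 1)).1.2 := hchain (j' + 1) k hjk hqk
      rw [hqsucc j'] at this
      exact hmemM (q j') _ this
  exact h ⟨s, fun k => M ((q k).1.1), fun k => hM _,
    fun i j hji => hsmem i j hji,
    fun i => by rw [hssucc i]; exact hnotM (q i)⟩
end

section
/- If set systems L_1 and L_2 both have finite elasticity, then the set system of elementwise unions L_1 ∪̃ L_2 = { L ∪ M : L ∈ L_1, M ∈ L_2 } has finite elasticity. -/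
/-- Infinite Ramsey theorem for pairs with two colors. -/
lemma ramsey2' (c : ℕ → ℕ → Bool) :
    ∃ (b : Bool) (e : ℕ → ℕ), StrictMono e ∧ ∀ j k, j < k → c (e j) (e k) = b := by
  classical
  have step : ∀ S : Set ℕ, S.Infinite →
      ∃ b : Bool, {x ∈ S | sInf S < x ∧ c (sInf S) x = b}.Infinite := by
    intro S hS
    by_contra h
    push_neg at h
    have hsub : {x ∈ S | sInf S < x} ⊆
        {x ∈ S | sInf S < x ∧ c (sInf S) x = true} ∪
        {x ∈ S | sInf S < x ∧ c (sInf S) x = false} := by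
      rintro x ⟨hx, hlt⟩
      rcases Bool.eq_false_or_eq_true (c (sInf S) x) with hb | hb
      · exact Or.inl ⟨hx, hlt, hb⟩
      · exact Or.inr ⟨hx, hlt, hb⟩
    have hinf : {x ∈ S | sInf S < x}.Infinite := by
      have : {x ∈ S | sInf S < x} = S \ Set.Iic (sInf S) := by
        ext x; simp only [Set.mem_setOf_eq, Set.mem_diff, Set.mem_Iic, not_le]
      rw [this]
      exact hS.diff (Set.finite_Iic _)
    exact hinf (((h true).union (h false)).subset hsub)
  choose bf hbf using step
  -- build nested infinite sets
  let g : ℕ → {S : Set ℕ // S.Infinite} := fun n =>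
    Nat.rec ⟨Set.univ, Set.infinite_univ⟩
      (fun _ p => ⟨{x ∈ p.1 | sInf p.1 < x ∧ c (sInf p.1) x = bf p.1 p.2}, hbf p.1 p.2⟩) n
  have hgsucc : ∀ n, (g (n+1)).1 =
      {x ∈ (g n).1 | sInf (g n).1 < x ∧ c (sInf (g n).1) x = bf (g n).1 (g n).2} := by
    intro n; rfl
  set a : ℕ → ℕ := fun n => sInf (g n).1 with ha
  set b : ℕ → Bool := fun n => bf (g n).1 (g n).2 with hb
  have hmem : ∀ n, a n ∈ (g n).1 := fun n => Nat.sInf_mem (g n).2.nonempty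
  have hsub : ∀ n, (g (n+1)).1 ⊆ (g n).1 := by
    intro n x hx; rw [hgsucc] at hx; exact hx.1
  have hchain : ∀ m n, n ≤ m → (g m).1 ⊆ (g n).1 := by
    intro m n h
    induction m with
    | zero => simp_all
    | succ m ih =>
      rcases Nat.eq_or_lt_of_le h with h' | h'
      · rw [h']
      · exact (hsub m).trans (ih (Nat.lt_succ_iff.mp h'))
  have key : ∀ n m, n < m → a n < a m ∧ c (a n) (a m) = b n := by
    intro n m hnm
    have : a m ∈ (g (n+1)).1 := hchain m (n+1) hnm (hmem m)
    rw [hgsucc] at this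
    exact ⟨this.2.1, this.2.2⟩
  have hamono : StrictMono a := strictMono_nat_of_lt_succ fun n => (key n (n+1) (Nat.lt_succ_self n)).1
  -- pigeonhole on colors
  have : {n | b n = true}.Infinite ∨ {n | b n = false}.Infinite := by
    rw [← Set.infinite_union]
    have : {n | b n = true} ∪ {n | b n = false} = Set.univ := by
      ext n; simp [Bool.eq_false_or_eq_true, or_comm]
    rw [this]; exact Set.infinite_univ
  rcases this with hinf | hinf
  · refine ⟨true, a ∘ Nat.nth (fun n => b n = true), hamono.comp (Nat.nth_strictMono hinf), ?_⟩
    intro j k hjk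
    have h1 := Nat.nth_mem_of_infinite hinf j
    have h2 := (key _ _ (Nat.nth_strictMono hinf hjk)).2
    simp only [Function.comp]
    rw [h2, h1]
  · refine ⟨false, a ∘ Nat.nth (fun n => b n = false), hamono.comp (Nat.nth_strictMono hinf), ?_⟩
    intro j k hjk
    have h1 := Nat.nth_mem_of_infinite hinf j
    have h2 := (key _ _ (Nat.nth_strictMono hinf hjk)).2
    simp only [Function.comp]
    rw [h2, h1]

theorem stmt7 {X : Type*} (𝓛₁ 𝓛₂ : Set (Set X))
    (h₁ : FiniteElasticity 𝓛₁) (h₂ : FiniteElasticity 𝓛₂) :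
    FiniteElasticity {N : Set X | ∃ L ∈ 𝓛₁, ∃ M ∈ 𝓛₂, N = L ∪ M} := by
  classical
  rintro ⟨t, N, hmem, hin, hout⟩
  choose L hL M hM hN using hmem
  set c : ℕ → ℕ → Bool := fun j i => if t j ∈ L (i - 1) then true else false with hc
  obtain ⟨b, e, hmono, hcol⟩ := ramsey2' c
  have hepos : ∀ k : ℕ, 1 ≤ e (k + 1) := by
    intro k
    have : e 0 < e (k + 1) := hmono (Nat.succ_pos k)
    omega
  have hesub : ∀ k : ℕ, e (k + 1) - 1 + 1 = e (k + 1) := fun k => Nat.succ_pred_eq_of_pos (hepos k)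
  have hnotN : ∀ k, t (e (k + 1)) ∉ N (e (k + 1) - 1) := by
    intro k
    have := hout (e (k + 1) - 1)
    rwa [hesub k] at this
  have hinN : ∀ j k, j < k → t (e j) ∈ N (e k - 1) := by
    intro j k hjk
    apply hin
    have : e j < e k := hmono hjk
    omega
  cases b with
  | true =>
    -- bad sequence for 𝓛₁
    refine h₁ ⟨fun k => t (e k), fun k => L (e (k + 1) - 1), fun k => hL _, ?_, ?_⟩
    · intro i j hji
      have := hcol j (i + 1) (Nat.lt_succ_of_le hji)
      simp only [hc] at this
      by_contra hcon
      rw [if_neg hcon] at this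
      exact absurd this (by simp)
    · intro i
      have hn := hnotN i
      rw [hN (e (i + 1) - 1)] at hn
      exact fun hcon => hn (Or.inl hcon)
  | false =>
    -- bad sequence for 𝓛₂
    refine h₂ ⟨fun k => t (e k), fun k => M (e (k + 1) - 1), fun k => hM _, ?_, ?_⟩
    · intro i j hji
      have hcolj := hcol j (i + 1) (Nat.lt_succ_of_le hji)
      simp only [hc] at hcolj
      have hjN := hinN j (i + 1) (Nat.lt_succ_of_le hji)
      rw [hN (e (i + 1) - 1)] at hjN
      rcases hjN with h | h
      · rw [if_pos h] at hcolj
        exact absurd hcolj (by simp)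
      · exact h
    · intro i
      have hn := hnotN i
      rw [hN (e (i + 1) - 1)] at hn
      exact fun hcon => hn (Or.inr hcon)
end

section
/- If set systems L and M have finite elasticity, then the set system of elementwise products L ×̃ M = { L × M : L ∈ L, M ∈ M } has finite elasticity. -/
lemma fe_key {X : Type*} {𝓛 : Set (Set X)} (h : FiniteElasticity 𝓛)
    (A : ℕ → Set X) (x : ℕ → X) (hA : ∀ i, A i ∈ 𝓛)
    (hx : ∀ i j, j ≤ i → x j ∈ A i) :
    {i | x (i + 1) ∉ A i}.Finite := by
  by_contra hinf
  rw [← Set.Infinite] at hinf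
  set S := {i | x (i + 1) ∉ A i}
  set n : ℕ → ℕ := Nat.nth S
  have hmem : ∀ k, n k ∈ S := fun k => Nat.nth_mem_of_infinite hinf k
  have hmono : StrictMono n := Nat.nth_strictMono hinf
  apply h
  refine ⟨fun k => Nat.rec (x 0) (fun m _ => x (n m + 1)) k, fun k => A (n k),
    fun k => hA _, ?_, ?_⟩
  · intro k j hj
    cases j with
    | zero => exact hx _ _ (Nat.zero_le _)
    | succ m =>
      have hm : m < k := hj
      exact hx _ _ (Nat.succ_le_of_lt (hmono hm))
  · intro k
    exact hmem k

theorem stmt8 {X Y : Type*} (𝓛 : Set (Set X)) (𝓜 : Set (Set Y))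
    (h₁ : FiniteElasticity 𝓛) (h₂ : FiniteElasticity 𝓜) :
    FiniteElasticity {N : Set (X × Y) | ∃ L ∈ 𝓛, ∃ M ∈ 𝓜, N = L ×ˢ M} := by
  rintro ⟨t, N, hN, hmem, hnot⟩
  choose L hL M hM hEq using hN
  have hmemL : ∀ i j, j ≤ i → (t j).1 ∈ L i := by
    intro i j hj
    have := hmem i j hj
    rw [hEq i] at this
    exact this.1
  have hmemM : ∀ i j, j ≤ i → (t j).2 ∈ M i := by
    intro i j hj
    have := hmem i j hj
    rw [hEq i] at this
    exact this.2
  have hcov : ∀ i, (t (i + 1)).1 ∉ L i ∨ (t (i + 1)).2 ∉ M i := by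
    intro i
    have := hnot i
    rw [hEq i, Set.mem_prod] at this
    tauto
  have hS1 : {i | (t (i + 1)).1 ∉ L i}.Finite := fe_key h₁ L (fun i => (t i).1) hL hmemL
  have hS2 : {i | (t (i + 1)).2 ∉ M i}.Finite := fe_key h₂ M (fun i => (t i).2) hM hmemM
  have : (Set.univ : Set ℕ).Finite := by
    refine (hS1.union hS2).subset ?_
    intro i _
    rcases hcov i with h | h
    · exact Or.inl h
    · exact Or.inr h
  exact Set.infinite_univ this
end

section
/- If set systems L_1 and L_2 have finite elasticity, then the set system of elementwise disjoint unions L_1 ⊎̃ L_2 = { (L × {0}) ∪ (M × {1}) : L ∈ L_1, M ∈ L_2 } has finite elasticity. -/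
private lemma aux_elast {X : Type*} (𝓛 : Set (Set X)) (h : FiniteElasticity 𝓛)
    (t : ℕ → X × ℕ) (c : ℕ) (P : ℕ → Set X) (hP : ∀ i, P i ∈ 𝓛)
    (hmem : ∀ i j, j ≤ i → (t j).2 = c → (t j).1 ∈ P i)
    (hnot : ∀ i, (t (i + 1)).2 = c → (t (i + 1)).1 ∉ P i)
    (hinf : {j | (t j).2 = c}.Infinite) : False := by
  set p : ℕ → Prop := fun j => (t j).2 = c with hp
  have hinf' : (setOf p).Infinite := hinf
  have hmono : StrictMono (Nat.nth p) := Nat.nth_strictMono hinf'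
  have hmemp : ∀ k, (t (Nat.nth p k)).2 = c := fun k => Nat.nth_mem_of_infinite hinf' k
  apply h
  refine ⟨fun k => (t (Nat.nth p k)).1, fun k => P (Nat.nth p (k + 1) - 1), fun k => hP _,
    ?_, ?_⟩
  · intro i j hji
    apply hmem _ _ _ (hmemp j)
    have h1 : Nat.nth p j ≤ Nat.nth p i := hmono.monotone hji
    have h2 : Nat.nth p i < Nat.nth p (i + 1) := hmono (Nat.lt_succ_self i)
    omega
  · intro i
    have hpos : 0 < Nat.nth p (i + 1) := by
      have := hmono (show 0 < i + 1 by omega)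
      omega
    have heq : Nat.nth p (i + 1) - 1 + 1 = Nat.nth p (i + 1) := by omega
    have := hnot (Nat.nth p (i + 1) - 1)
    rw [heq] at this
    exact this (hmemp (i + 1))

theorem stmt9 {X : Type*} (𝓛₁ 𝓛₂ : Set (Set X))
    (h₁ : FiniteElasticity 𝓛₁) (h₂ : FiniteElasticity 𝓛₂) :
    FiniteElasticity
      {N : Set (X × ℕ) |
        ∃ L ∈ 𝓛₁, ∃ M ∈ 𝓛₂, N = (L ×ˢ ({0} : Set ℕ)) ∪ (M ×ˢ ({1} : Set ℕ))} := by
  rintro ⟨t, N, hN, hmem, hnot⟩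
  choose L hL M hM hEq using hN
  have hmem' : ∀ i j, j ≤ i →
      ((t j).2 = 0 → (t j).1 ∈ L i) ∧ ((t j).2 = 1 → (t j).1 ∈ M i) := by
    intro i j hji
    have := hmem i j hji
    rw [hEq i] at this
    rcases this with h | h
    · obtain ⟨h1, h2⟩ := h
      simp only [Set.mem_singleton_iff] at h2
      exact ⟨fun _ => h1, fun hc => by omega⟩
    · obtain ⟨h1, h2⟩ := h
      simp only [Set.mem_singleton_iff] at h2
      exact ⟨fun hc => by omega, fun _ => h1⟩
  have hnot' : ∀ i,
      ((t (i + 1)).2 = 0 → (t (i + 1)).1 ∉ L i) ∧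
      ((t (i + 1)).2 = 1 → (t (i + 1)).1 ∉ M i) := by
    intro i
    have := hnot i
    rw [hEq i] at this
    constructor
    · intro hc hmemL
      exact this (Or.inl ⟨hmemL, by simpa using hc⟩)
    · intro hc hmemM
      exact this (Or.inr ⟨hmemM, by simpa using hc⟩)
  have hall : ∀ j, (t j).2 = 0 ∨ (t j).2 = 1 := by
    intro j
    have := hmem j j le_rfl
    rw [hEq j] at this
    rcases this with h | h
    · exact Or.inl (by simpa using h.2)
    · exact Or.inr (by simpa using h.2)
  have hunion : {j | (t j).2 = 0} ∪ {j | (t j).2 = 1} = Set.univ := by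
    ext j; simpa using hall j
  by_cases h0 : {j | (t j).2 = 0}.Infinite
  · exact aux_elast 𝓛₁ h₁ t 0 L hL (fun i j hji => (hmem' i j hji).1)
      (fun i => (hnot' i).1) h0
  · have h1inf : {j | (t j).2 = 1}.Infinite := by
      rw [Set.not_infinite] at h0
      by_contra h1
      rw [Set.not_infinite] at h1
      have := (h0.union h1)
      rw [hunion] at this
      exact Set.infinite_univ this
    exact aux_elast 𝓛₂ h₂ t 1 M hM (fun i j hji => (hmem' i j hji).2)
      (fun i => (hnot' i).2) h1inf
end

section
/- If set systems L and M have finite elasticity and both consist of subsets of the same set X, then their union L ∪ M (as a family of sets) has finite elasticity. -/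
open Filter

section Elasticity

variable {X : Type*} {t : ℕ → X} {L : ℕ → Set X}

theorem exists_elasticity_comp_of_strictMono (hmem : ∀ i j, j ≤ i → t j ∈ L i)
    (hnot : ∀ i, t (i + 1) ∉ L i) {φ : ℕ → ℕ} (hφ : StrictMono φ) :
    ∃ t' : ℕ → X, (∀ i j, j ≤ i → t' j ∈ L (φ i)) ∧ ∀ i, t' (i + 1) ∉ L (φ i) := by
  refine ⟨fun n => Nat.casesOn n (t 0) fun m => t (φ m + 1), ?_, fun i => hnot (φ i)⟩
  rintro i (_ | m) hj
  · exact hmem (φ i) 0 (Nat.zero_le _)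
  · exact hmem (φ i) (φ m + 1) (hφ (Nat.lt_of_succ_le hj))

theorem not_finiteElasticity_of_frequently_mem {𝓛 : Set (Set X)}
    (hmem : ∀ i j, j ≤ i → t j ∈ L i) (hnot : ∀ i, t (i + 1) ∉ L i)
    (h𝓛 : ∃ᶠ i in atTop, L i ∈ 𝓛) : ¬ FiniteElasticity 𝓛 := by
  obtain ⟨φ, hφ, hφ𝓛⟩ := extraction_of_frequently_atTop h𝓛
  obtain ⟨t', ht'mem, ht'not⟩ := exists_elasticity_comp_of_strictMono hmem hnot hφ
  exact fun hfin => hfin ⟨t', L ∘ φ, hφ𝓛, ht'mem, ht'not⟩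

end Elasticity

theorem stmt10 {X : Type*} (𝓛 𝓜 : Set (Set X))
    (h₁ : FiniteElasticity 𝓛) (h₂ : FiniteElasticity 𝓜) :
    FiniteElasticity (𝓛 ∪ 𝓜) := by
  rintro ⟨t, L, hL, hmem, hnot⟩
  have hfreq : ∃ᶠ i in atTop, L i ∈ 𝓛 ∨ L i ∈ 𝓜 := Frequently.of_forall hL
  rcases frequently_or_distrib.mp hfreq with h𝓛 | h𝓜
  · exact not_finiteElasticity_of_frequently_mem hmem hnot h𝓛 h₁
  · exact not_finiteElasticity_of_frequently_mem hmem hnot h𝓜 h₂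
end

section
/- If a class L of languages over an alphabet Σ has finite elasticity, then the class of Kleene closures { L* : L ∈ L } has finite elasticity. -/
/-- The Kleene closure of a language: all finite concatenations of words of `L`
(including the empty word). -/
def kleeneStar {σ : Type*} (L : Set (List σ)) : Set (List σ) :=
  {x | ∃ ws : List (List σ), x = ws.flatten ∧ ∀ w ∈ ws, w ∈ L}

/-!
Suppose `t₀, t₁, …` and `L₁*, L₂*, …` witness infinite elasticity of the Kleene closures.
A word has only finitely many factorisations into nonempty pieces, so along a nonprincipal
ultrafilter on the indices `m` one factorisation `dₙ` of `tₙ` has all its pieces in `Lₘ` for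
almost all `m`. Since `tₙ ∉ Lₙ*`, some piece of `dₙ` lies outside `Lₙ`. Any finitely many of the
`dₙ` fit into a common `Lₘ`, so we can pick indices `N₀, N₁, …` with all pieces of
`d_{N₀}, …, d_{Nₖ}` in `L_{Nₖ₊₁}`; a piece of each `d_{Nₖ}` outside `L_{Nₖ}` then gives an
infinite elasticity of the original class.
-/

theorem not_finiteElasticity_of_forall_finset {X ι : Type*} {𝓛 : Set (Set X)}
    (L : ι → Set X) (hL : ∀ i, L i ∈ 𝓛) (P : ι → Set X) (hPL : ∀ i, ¬ P i ⊆ L i)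
    (hcommon : ∀ s : Finset ι, ∃ m, ∀ i ∈ s, P i ⊆ L m) :
    ¬ FiniteElasticity 𝓛 := by
  classical
  choose next hnext using hcommon
  choose b hbP hbL using fun i => Set.not_subset.1 (hPL i)
  -- `F k = {N 0, …, N (k - 1)}`
  let F : ℕ → Finset ι := fun k => Nat.rec ∅ (fun _ s => insert (next s) s) k
  let N : ℕ → ι := fun k => next (F k)
  have hF_succ : ∀ k, F (k + 1) = insert (N k) (F k) := fun _ => rfl
  have hF_mono : Monotone F :=
    monotone_nat_of_le_succ fun k => hF_succ k ▸ Finset.subset_insert _ _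
  have hN_mem : ∀ i j, j ≤ i → N j ∈ F (i + 1) := fun i j hji =>
    hF_mono (Nat.succ_le_succ hji) (hF_succ j ▸ Finset.mem_insert_self _ _)
  exact not_not.2 ⟨fun k => b (N k), fun k => L (N (k + 1)), fun k => hL _,
    fun i j hji => hnext _ _ (hN_mem i j hji) (hbP _), fun i => hbL _⟩

theorem mem_kleeneStar_iff_exists_ne_nil {σ : Type*} {L : Set (List σ)} {x : List σ} :
    x ∈ kleeneStar L ↔ ∃ ws : List (List σ), ws.flatten = x ∧ [] ∉ ws ∧ ∀ w ∈ ws, w ∈ L := by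
  constructor
  · rintro ⟨ws, rfl, hws⟩
    exact ⟨ws.filter (· ≠ []), List.flatten_filter_ne_nil, by simp,
      fun w hw => hws w (List.mem_of_mem_filter hw)⟩
  · rintro ⟨ws, rfl, -, hws⟩
    exact ⟨ws, rfl, hws⟩

theorem finite_setOf_flatten_eq_of_ne_nil {σ : Type*} (x : List σ) :
    {ws : List (List σ) | ws.flatten = x ∧ [] ∉ ws}.Finite := by
  refine (Set.finite_range fun c : Composition x.length => x.splitWrtComposition c).subset ?_
  rintro ws ⟨rfl, hnil⟩
  have hpos : ∀ i ∈ ws.map List.length, 0 < i := by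
    simp only [List.mem_map]
    rintro _ ⟨w, hw, rfl⟩
    exact List.length_pos_iff.2 fun h => hnil (h ▸ hw)
  exact ⟨⟨ws.map List.length, hpos _, by simp [List.length_flatten]⟩,
    List.splitWrtComposition_flatten ws _ rfl⟩

theorem Ultrafilter.exists_flatten_eq_eventually_mem {σ ι : Type*} {U : Ultrafilter ι}
    {L : ι → Set (List σ)} {x : List σ} (hx : ∀ᶠ m in U, x ∈ kleeneStar (L m)) :
    ∃ ws : List (List σ), ws.flatten = x ∧ ∀ᶠ m in U, ∀ w ∈ ws, w ∈ L m := by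
  have hdecomp : ∀ᶠ m in U, ∃ ws ∈ {ws : List (List σ) | ws.flatten = x ∧ [] ∉ ws},
      ∀ w ∈ ws, w ∈ L m :=
    hx.mono fun m hm => by
      obtain ⟨ws, hflat, hnil, hws⟩ := mem_kleeneStar_iff_exists_ne_nil.1 hm
      exact ⟨ws, ⟨hflat, hnil⟩, hws⟩
  obtain ⟨ws, ⟨hflat, -⟩, hws⟩ :=
    (U.eventually_exists_mem_iff (finite_setOf_flatten_eq_of_ne_nil x)).1 hdecomp
  exact ⟨ws, hflat, hws⟩

theorem stmt11_general {σ : Type*} (𝓛 : Set (Set (List σ)))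
    (h : FiniteElasticity 𝓛) :
    FiniteElasticity {M : Set (List σ) | ∃ L ∈ 𝓛, M = kleeneStar L} := by
  rintro ⟨t, K, hK, hmem, hnot⟩
  choose L hL hKL using hK
  have hlater : ∀ n, ∀ᶠ m in Filter.hyperfilter ℕ, t (n + 1) ∈ kleeneStar (L m) := fun n =>
    Filter.Eventually.mono (Nat.hyperfilter_le_atTop (Filter.eventually_gt_atTop n))
      fun m hnm => hKL m ▸ hmem m (n + 1) hnm
  choose d hd_flat hd_mem using fun n => Ultrafilter.exists_flatten_eq_eventually_mem (hlater n)
  refine not_finiteElasticity_of_forall_finset L hL (fun n => {w | w ∈ d n}) ?_ ?_ h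
  · exact fun n hsub => hnot n (hKL n ▸ ⟨d n, (hd_flat n).symm, hsub⟩)
  · exact fun s => ((Filter.eventually_all_finset s).2 fun n _ => hd_mem n).exists

theorem stmt11 {σ : Type*} [Fintype σ] (𝓛 : Set (Set (List σ)))
    (h : FiniteElasticity 𝓛) :
    FiniteElasticity {M : Set (List σ) | ∃ L ∈ 𝓛, M = kleeneStar L} :=
  stmt11_general 𝓛 h
end

section
/- If a class L of languages over Σ has finite elasticity, then the class of shuffle closures { L^⊛ : L ∈ L } has finite elasticity. -/
/-- `IsShuffle u v w` : the word `w` is an interleaving of the words `u` and `v`. -/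
inductive IsShuffle {σ : Type*} : List σ → List σ → List σ → Prop
  | nil : IsShuffle [] [] []
  | left {a : σ} {u v w : List σ} : IsShuffle u v w → IsShuffle (a :: u) v (a :: w)
  | right {a : σ} {u v w : List σ} : IsShuffle u v w → IsShuffle u (a :: v) (a :: w)

/-- The shuffle product of two languages. -/
def shuffleProd {σ : Type*} (L M : Set (List σ)) : Set (List σ) :=
  {w | ∃ u ∈ L, ∃ v ∈ M, IsShuffle u v w}

/-- Iterated shuffle: `shufflePow L n` is the shuffle of `n + 1` copies of `L`. -/
def shufflePow {σ : Type*} (L : Set (List σ)) : ℕ → Set (List σ)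
  | 0 => L
  | n + 1 => shuffleProd L (shufflePow L n)

/-- The shuffle closure `L^⊛ = L ∪ (L◇L) ∪ (L◇L◇L) ∪ ⋯ ∪ {ε}`. -/
def shuffleClosure {σ : Type*} (L : Set (List σ)) : Set (List σ) :=
  (⋃ n : ℕ, shufflePow L n) ∪ {([] : List σ)}

/-!
A word `w ∈ L^⊛` is a shuffle of sublists of `w`, so whether `w ∈ L^⊛` depends only on the
finite trace `L ∩ {u | u <+ w}`. Finite elasticity survives any monotone operator with this
finite-trace property: given an infinite elasticity `t_j ∈ F L_i` (`j ≤ i`), `t_{i+1} ∉ F L_i`,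
a nonprincipal ultrafilter on the indices picks for each `j` a trace `S_j` of `t_j` shared by
almost all `L_i`; then `S_0 ∪ ⋯ ∪ S_n ⊆ L_i` for some `i ≥ n` while `S_{i+1} ⊈ L_i`, and
choosing a point of each `S_{i+1} \ L_i` along a subsequence yields an infinite elasticity of `𝓛`.
-/

section Elasticity

variable {X Y : Type*}

theorem not_finiteElasticity_of_sets {𝓛 : Set (Set X)} (S L : ℕ → Set X) (hL : ∀ i, L i ∈ 𝓛)
    (hS : ∀ i j, j ≤ i → S j ⊆ L i) (hS' : ∀ i, ¬ S (i + 1) ⊆ L i) : ¬ FiniteElasticity 𝓛 := by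
  choose x hxS hxL using fun i => Set.not_subset.mp (hS' i)
  exact fun h => h ⟨x, fun i => L (i + 1), fun i => hL (i + 1),
    fun i j hji => hS (i + 1) (j + 1) (by omega) (hxS j), fun i => hxL (i + 1)⟩

theorem not_finiteElasticity_of_sets_of_exists_ge {𝓛 : Set (Set X)} (S L : ℕ → Set X)
    (hL : ∀ i, L i ∈ 𝓛) (hS : ∀ n, ∃ i ≥ n, ∀ j ≤ n, S j ⊆ L i)
    (hS' : ∀ i, ¬ S (i + 1) ⊆ L i) : ¬ FiniteElasticity 𝓛 := by
  choose g hg hgS using hS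
  set J : ℕ → ℕ := fun k => (fun n => g n + 1)^[k] 0
  have hJ : ∀ k, J (k + 1) = g (J k) + 1 := fun k => Function.iterate_succ_apply' _ k 0
  have hJmono : Monotone J :=
    monotone_nat_of_le_succ fun k => by rw [hJ]; exact Nat.le_succ_of_le (hg _)
  refine not_finiteElasticity_of_sets (fun k => S (J k)) (fun k => L (g (J k))) (fun k => hL _)
    (fun k j hjk => hgS _ _ (hJmono hjk)) fun k => ?_
  rw [hJ]
  exact hS' _

theorem FiniteElasticity.of_monotone_of_finitary {𝓛 : Set (Set X)} {F : Set X → Set Y}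
    (hF : Monotone F) (hfin : ∀ y, ∃ A : Set X, A.Finite ∧ ∀ L, y ∈ F L → y ∈ F (L ∩ A))
    (h : FiniteElasticity 𝓛) : FiniteElasticity {M | ∃ L ∈ 𝓛, M = F L} := by
  rintro ⟨t, M, hM, htM, htM'⟩
  choose L hL hML using hM
  obtain rfl : M = fun i => F (L i) := funext hML
  choose A hAfin hA using hfin
  have htrace : ∀ j, ∃ S ∈ {S | S ⊆ A (t j)},
      {i | L i ∩ A (t j) = S} ∈ Filter.hyperfilter ℕ := fun j =>
    (Ultrafilter.finite_biUnion_mem_iff (hAfin (t j)).finite_subsets).mp <|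
      Filter.univ_mem' fun i => Set.mem_biUnion Set.inter_subset_right rfl
  choose S _ hSU using htrace
  have hcommon : ∀ n, ∃ i ≥ n, ∀ j ≤ n, L i ∩ A (t j) = S j := fun n =>
    (Filter.Eventually.and (Nat.hyperfilter_le_atTop (Filter.eventually_ge_atTop n))
      ((Filter.eventually_all_finite (Set.finite_Iic n)).mpr fun j _ => hSU j)).exists
  have htS : ∀ j, t j ∈ F (S j) := fun j => by
    obtain ⟨i, hij, hi⟩ := hcommon j
    rw [← hi j le_rfl]
    exact hA _ _ (htM i j hij)
  refine not_finiteElasticity_of_sets_of_exists_ge S L hL (fun n => ?_)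
    (fun i hsub => htM' i (hF hsub (htS (i + 1)))) h
  obtain ⟨i, hin, hi⟩ := hcommon n
  exact ⟨i, hin, fun j hj => hi j hj ▸ Set.inter_subset_left⟩

end Elasticity

section Shuffle

variable {σ : Type*}

theorem IsShuffle.sublist_left {u v w : List σ} (h : IsShuffle u v w) : u.Sublist w := by
  induction h with
  | nil => exact List.Sublist.refl _
  | left _ ih => exact ih.cons_cons _
  | right _ ih => exact ih.cons _

theorem IsShuffle.sublist_right {u v w : List σ} (h : IsShuffle u v w) : v.Sublist w := by
  induction h with
  | nil => exact List.Sublist.refl _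
  | left _ ih => exact ih.cons _
  | right _ ih => exact ih.cons_cons _

theorem shuffleProd_mono {L L' M M' : Set (List σ)} (hL : L ⊆ L') (hM : M ⊆ M') :
    shuffleProd L M ⊆ shuffleProd L' M' :=
  fun _ ⟨u, hu, v, hv, huvw⟩ => ⟨u, hL hu, v, hM hv, huvw⟩

theorem shufflePow_mono {L L' : Set (List σ)} (hL : L ⊆ L') (n : ℕ) :
    shufflePow L n ⊆ shufflePow L' n := by
  induction n with
  | zero => exact hL
  | succ n ih => exact shuffleProd_mono hL ih

theorem shuffleClosure_mono : Monotone (shuffleClosure (σ := σ)) := fun _ _ hL =>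
  Set.union_subset_union_left _ (Set.iUnion_mono fun n => shufflePow_mono hL n)

theorem mem_shufflePow_inter_sublists {L : Set (List σ)} {n : ℕ} {w : List σ}
    (hw : w ∈ shufflePow L n) : w ∈ shufflePow (L ∩ {u | u.Sublist w}) n := by
  induction n generalizing w with
  | zero => exact ⟨hw, List.Sublist.refl w⟩
  | succ n ih =>
    obtain ⟨u, hu, v, hv, huvw⟩ := hw
    refine ⟨u, ⟨hu, huvw.sublist_left⟩, v, ?_, huvw⟩
    exact shufflePow_mono (Set.inter_subset_inter_right _ fun x hx => hx.trans huvw.sublist_right)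
      n (ih hv)

theorem mem_shuffleClosure_inter_sublists {L : Set (List σ)} {w : List σ}
    (hw : w ∈ shuffleClosure L) : w ∈ shuffleClosure (L ∩ {u | u.Sublist w}) := by
  rcases hw with hw | hw
  · obtain ⟨n, hn⟩ := Set.mem_iUnion.mp hw
    exact Or.inl (Set.mem_iUnion.mpr ⟨n, mem_shufflePow_inter_sublists hn⟩)
  · exact Or.inr hw

theorem finite_setOf_sublist (w : List σ) : {u : List σ | u.Sublist w}.Finite := by
  simpa only [List.mem_sublists] using w.sublists.finite_toSet

end Shuffle

theorem stmt12_general {σ : Type*} (𝓛 : Set (Set (List σ)))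
    (h : FiniteElasticity 𝓛) :
    FiniteElasticity {M : Set (List σ) | ∃ L ∈ 𝓛, M = shuffleClosure L} :=
  h.of_monotone_of_finitary shuffleClosure_mono fun w =>
    ⟨_, finite_setOf_sublist w, fun _ => mem_shuffleClosure_inter_sublists⟩

theorem stmt12 {σ : Type*} [Fintype σ] (𝓛 : Set (Set (List σ)))
    (h : FiniteElasticity 𝓛) :
    FiniteElasticity {M : Set (List σ) | ∃ L ∈ 𝓛, M = shuffleClosure L} :=
  stmt12_general 𝓛 h
end

section
/- For a quasi-order X, the order type of X (the rank of its tree of bad sequences) equals the dimension of the set system ss(X) of upper-closed subsets of X (the rank of its tree of production sequences). In particular, ⟨t_0, ..., t_{l-1}⟩ is a bad sequence of X if and only if there exist upper-closed sets L_1, ..., L_l with {t_0,...,t_{i-1}} ⊆ L_i for all i and t_j ∉ L_j for j ≤ l-1. -/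
/-- A set `L` is upper-closed with respect to the relation `r`. -/
def UpperClosed {X : Type*} (r : X → X → Prop) (L : Set X) : Prop :=
  ∀ ⦃x y⦄, x ∈ L → r x y → y ∈ L

/-- The child relation of a tree of finite sequences: `a` is an immediate extension of `b`
lying in `T`.  The rank of the tree is the `Acc.rank` of the root `[]`. -/
def childRel {A : Type*} (T : Set (List A)) (a b : List A) : Prop :=
  a ∈ T ∧ ∃ x : A, a = b ++ [x]

/-- A (finite) bad sequence: `t i ⋠ t j` whenever `i < j`. -/
def IsBadSeq {X : Type*} (r : X → X → Prop) (t : List X) : Prop :=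
  t.Pairwise fun a b => ¬ r a b

/-- A production sequence `⟨(t₀, L₁), …, (t_{l-1}, L_l)⟩` of the set system `𝓛`:
each `Lᵢ ∈ 𝓛`, `{t₀, …, t_{i-1}} ⊆ Lᵢ`, and `tᵢ ∉ Lᵢ`. -/
def IsProdSeq {X : Type*} (𝓛 : Set (Set X)) (p : List (X × Set X)) : Prop :=
  (∀ (i : ℕ) (hi : i < p.length), (p.get ⟨i, hi⟩).2 ∈ 𝓛) ∧
  (∀ (i j : ℕ) (hi : i < p.length) (hj : j ≤ i),
    (p.get ⟨j, by omega⟩).1 ∈ (p.get ⟨i, hi⟩).2) ∧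
  (∀ (i : ℕ) (hi : i + 1 < p.length),
    (p.get ⟨i + 1, hi⟩).1 ∉ (p.get ⟨i, by omega⟩).2)

namespace Stmt13Aux

variable {X : Type*} (r : X → X → Prop)

/-- upward closure of a finite list -/
def cl (t : List X) : Set X := {y | ∃ a ∈ t, r a y}

/-- the canonical production sequence of a bad sequence -/
def F (t : List X) : List (X × Set X) :=
  List.ofFn fun i : Fin t.length => (t.get i, cl r (t.take (i + 1)))

theorem length_F (t : List X) : (F r t).length = t.length := by simp [F]

theorem getElem_F (t : List X) (i : ℕ) (hi : i < (F r t).length) :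
    (F r t)[i] =
      (t[i]'(by simpa [length_F] using hi), cl r (t.take (i + 1))) := by
  simp [F]

theorem F_append (u : List X) (x : X) :
    F r (u ++ [x]) = F r u ++ [(x, cl r (u ++ [x]))] := by
  apply List.ext_getElem
  · simp [length_F]
  · intro i h1 h2
    rcases Nat.lt_or_ge i u.length with hi | hi
    · have e1 : (F r u ++ [(x, cl r (u ++ [x]))])[i]'h2
          = (F r u)[i]'(by simpa [length_F] using hi) :=
        List.getElem_append_left (by simpa [length_F] using hi)
      rw [getElem_F, e1, getElem_F]
      congr 1
      · exact List.getElem_append_left hi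
      · rw [List.take_append_of_le_length (by omega)]
    · have hiu : i = u.length := by
        simp only [length_F, List.length_append, List.length_singleton] at h1; omega
      subst hiu
      have e1 : (F r u ++ [(x, cl r (u ++ [x]))])[u.length]'h2
          = (x, cl r (u ++ [x])) := by
        rw [List.getElem_append_right (by simp [length_F])]
        simp [length_F]
      rw [getElem_F, e1]
      congr 1
      · have e2 : (u ++ [x])[u.length]'(by simp) = x := by
          rw [List.getElem_append_right (le_refl _)]
          simp
        exact e2
      · rw [List.take_of_length_le (by simp)]

theorem map_fst_F (t : List X) : (F r t).map Prod.fst = t := by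
  apply List.ext_getElem
  · simp [length_F]
  · intro i h1 h2
    rw [List.getElem_map, getElem_F]

theorem prod_of_bad (hrefl : ∀ x, r x x) (htrans : ∀ x y z, r x y → r y z → r x z)
    {t : List X} (ht : IsBadSeq r t) :
    IsProdSeq {L | UpperClosed r L} (F r t) := by
  rw [IsBadSeq, List.pairwise_iff_getElem] at ht
  refine ⟨?_, ?_, ?_⟩
  · intro i hi
    rw [List.get_eq_getElem, getElem_F]
    intro a b ha hab
    obtain ⟨c, hc, hca⟩ := ha
    exact ⟨c, hc, htrans _ _ _ hca hab⟩
  · intro i j hi hj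
    rw [List.get_eq_getElem, List.get_eq_getElem, getElem_F, getElem_F]
    have hlen : i < t.length := by simpa [length_F] using hi
    have hij : j < t.length := by omega
    refine ⟨t[j], ?_, hrefl _⟩
    have hjt : j < (t.take (i+1)).length := by simp; omega
    have : (t.take (i+1))[j] = t[j] := List.getElem_take ..
    rw [← this]
    exact List.getElem_mem _
  · intro i hi
    rw [List.get_eq_getElem, List.get_eq_getElem, getElem_F, getElem_F]
    rintro ⟨a, ha, har⟩
    have hlen : i + 1 < t.length := by simpa [length_F] using hi
    obtain ⟨j, hj, rfl⟩ := List.mem_iff_getElem.mp ha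
    have hj' : j < i + 1 := by simp at hj; omega
    have hb := ht j (i+1) (by omega) hlen hj'
    rw [List.getElem_take] at har
    exact hb har

theorem bad_of_prod {p : List (X × Set X)} (hp : IsProdSeq {L | UpperClosed r L} p) :
    IsBadSeq r (p.map Prod.fst) := by
  obtain ⟨h1, h2, h3⟩ := hp
  rw [IsBadSeq, List.pairwise_iff_getElem]
  intro i j hi hj hij hr
  simp only [List.length_map] at hi hj
  simp only [List.getElem_map] at hr
  have hji : (j - 1) + 1 = j := by omega
  have hmem : (p.get ⟨i, by omega⟩).1 ∈ (p.get ⟨j-1, by omega⟩).2 :=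
    h2 (j-1) i (by omega) (by omega)
  have hup : UpperClosed r (p.get ⟨j-1, by omega⟩).2 := h1 (j-1) (by omega)
  have hin : (p.get ⟨(j-1)+1, by omega⟩).1 ∈ (p.get ⟨j-1, by omega⟩).2 := by
    have hg : p.get ⟨(j-1)+1, by omega⟩ = p.get ⟨j, hj⟩ :=
      congrArg p.get (Fin.ext (show j-1+1 = j by omega))
    rw [hg]
    exact hup hmem (by simpa using hr)
  exact h3 (j-1) (by omega) hin

theorem bad_prefix {u : List X} {x : X} (h : IsBadSeq r (u ++ [x])) : IsBadSeq r u :=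
  List.Pairwise.sublist (List.sublist_append_left u [x]) h

/-- general rank comparison lemma for relation homomorphisms -/
theorem rank_le_of_hom {A B : Type u} {ra : A → A → Prop} {rb : B → B → Prop}
    (f : A → B) (hf : ∀ a a', ra a a' → rb (f a) (f a'))
    {a : A} (h₁ : Acc ra a) (h₂ : Acc rb (f a)) : h₁.rank ≤ h₂.rank := by
  induction h₁ with
  | intro a ha ih =>
    rw [Acc.rank_eq]
    refine Ordinal.iSup_le ?_
    rintro ⟨b, hb⟩
    rw [Order.succ_le_iff]
    calc (ha b hb).rank ≤ (h₂.inv (hf b a hb)).rank := ih b hb _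
      _ < h₂.rank := Acc.rank_lt_of_rel h₂ (hf b a hb)

theorem F_nil : F r ([] : List X) = [] := by simp [F]

theorem rank_congr {A : Type*} {s : A → A → Prop} {a b : A} (h : a = b)
    (ha : Acc s a) (hb : Acc s b) : ha.rank = hb.rank := by
  subst h
  exact congrArg Acc.rank (Subsingleton.elim ha hb)

end Stmt13Aux

open Stmt13Aux in
theorem stmt13 {X : Type*} (r : X → X → Prop)
    (hrefl : ∀ x, r x x) (htrans : ∀ x y z, r x y → r y z → r x z) :
    (WellFounded (childRel {t : List X | IsBadSeq r t}) ↔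
      WellFounded (childRel {p : List (X × Set X) | IsProdSeq {L | UpperClosed r L} p})) ∧
    (∀ (h₁ : Acc (childRel {t : List X | IsBadSeq r t}) [])
       (h₂ : Acc (childRel {p : List (X × Set X) | IsProdSeq {L | UpperClosed r L} p}) []),
       h₁.rank = h₂.rank) ∧
    (∀ t : List X, IsBadSeq r t ↔
      ∃ p : List (X × Set X), IsProdSeq {L | UpperClosed r L} p ∧ p.map Prod.fst = t) := by
  have homF : ∀ t u : List X, childRel {t : List X | IsBadSeq r t} t u →
      childRel {p : List (X × Set X) | IsProdSeq {L | UpperClosed r L} p} (F r t) (F r u) := by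
    rintro t u ⟨ht, x, rfl⟩
    exact ⟨prod_of_bad r hrefl htrans ht, (x, cl r (u ++ [x])), F_append r u x⟩
  have homG : ∀ p q : List (X × Set X),
      childRel {p : List (X × Set X) | IsProdSeq {L | UpperClosed r L} p} p q →
      childRel {t : List X | IsBadSeq r t} (p.map Prod.fst) (q.map Prod.fst) := by
    rintro p q ⟨hp, x, rfl⟩
    exact ⟨bad_of_prod r hp, x.1, by simp⟩
  refine ⟨⟨fun hwf => ?_, fun hwf => ?_⟩, fun h₁ h₂ => ?_, fun t => ?_⟩
  · exact Subrelation.wf (fun {p q} h => homG p q h)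
      (InvImage.wf (List.map Prod.fst) hwf)
  · exact Subrelation.wf (fun {t u} h => homF t u h) (InvImage.wf (F r) hwf)
  · apply le_antisymm
    · have h₂' : Acc (childRel {p : List (X × Set X) | IsProdSeq {L | UpperClosed r L} p})
          (F r ([] : List X)) := (F_nil r).symm ▸ h₂
      exact (rank_le_of_hom (F r) homF h₁ h₂').trans_eq (rank_congr (F_nil r) h₂' h₂)
    · have h₁' : Acc (childRel {t : List X | IsBadSeq r t})
          (([] : List (X × Set X)).map Prod.fst) := h₁
      exact (rank_le_of_hom (List.map Prod.fst) homG h₂ h₁').trans_eq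
        (rank_congr rfl h₁' h₁)
  · constructor
    · intro ht
      exact ⟨F r t, prod_of_bad r hrefl htrans ht, map_fst_F r t⟩
    · rintro ⟨p, hp, rfl⟩
      exact bad_of_prod r hp
end

section
/- For any set system L, if the induced quasi-order qo(L) is a well-quasi-order, then L has finite elasticity; moreover dim L ≤ otp(qo(L)). -/
/-- The quasi-order induced by a set system: `x ≼ y` iff every member of `𝓛`
containing `x` contains `y`. -/
def qoRel {X : Type*} (𝓛 : Set (Set X)) (x y : X) : Prop :=
  ∀ L ∈ 𝓛, x ∈ L → y ∈ L

/-!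
A production sequence `(t₀, L₁), …, (t_{l-1}, L_l)` projects to a bad sequence `t₀, …, t_{l-1}`
of `qo(𝓛)`: for `i < j`, the set `L_j` witnesses `tᵢ ⋠ tⱼ`, as it contains `tᵢ` but not `tⱼ`.
This projection maps the tree of production sequences into the tree of bad sequences, edge by
edge, so it transfers well-foundedness backwards and cannot increase rank. The tree of bad
sequences is well-founded because an infinite branch would be an infinite bad sequence.
-/

universe u

theorem Acc.of_map {α β : Type*} {r : α → α → Prop} {s : β → β → Prop} {f : α → β}
    (hf : ∀ a b, r a b → s (f a) (f b)) {a : α} (hfa : Acc s (f a)) : Acc r a :=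
  Subrelation.accessible (hf _ _) (InvImage.accessible f hfa)

theorem Acc.rank_le_of_map {α β : Type u} {r : α → α → Prop} {s : β → β → Prop} {f : α → β}
    (hf : ∀ a b, r a b → s (f a) (f b)) {a : α} (ha : Acc r a) (hfa : Acc s (f a)) :
    ha.rank ≤ hfa.rank := by
  induction ha with
  | intro a _ ih =>
    rw [Acc.rank_eq]
    refine Ordinal.iSup_le fun ⟨b, hba⟩ => Order.succ_le_of_lt ?_
    exact (ih b hba (hfa.inv (hf _ _ hba))).trans_lt (hfa.rank_lt_of_rel (hf _ _ hba))

theorem exists_branch_of_not_acc_childRel {A : Type*} {T : Set (List A)}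
    (h : ¬ Acc (childRel T) []) : ∃ x : ℕ → A, ∀ n, (List.range (n + 1)).map x ∈ T := by
  obtain ⟨g, hg0, hg⟩ := not_acc_iff_exists_descending_chain.mp h
  choose x hx using fun n => (hg n).2
  have hprefix : ∀ n, g n = (List.range n).map x := by
    intro n
    induction n with
    | zero => exact hg0
    | succ n ih => rw [hx n, ih, List.range_succ, List.map_append, List.map_singleton]
  exact ⟨x, fun n => hprefix (n + 1) ▸ (hg n).1⟩

theorem acc_childRel_isBadSeq_of_isWqo {X : Type*} {r : X → X → Prop} (hwqo : IsWqo r) :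
    Acc (childRel {t : List X | IsBadSeq r t}) [] := by
  by_contra hroot
  obtain ⟨x, hx⟩ := exists_branch_of_not_acc_childRel hroot
  refine hwqo ⟨x, fun i j hij => ?_⟩
  have hbad := List.pairwise_iff_getElem.mp (hx j) i j (by simp; omega) (by simp) hij
  simpa only [List.getElem_map, List.getElem_range] using hbad

theorem IsProdSeq.isBadSeq_map_fst {X : Type*} {𝓛 : Set (Set X)} {p : List (X × Set X)}
    (hp : IsProdSeq 𝓛 p) : IsBadSeq (qoRel 𝓛) (p.map Prod.fst) := by
  obtain ⟨hmem𝓛, hsub, hnot⟩ := hp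
  rw [IsBadSeq, List.pairwise_iff_getElem]
  intro i j hi hj hij hle
  simp only [List.length_map] at hi hj
  obtain ⟨k, rfl⟩ : ∃ k, j = k + 1 := ⟨j - 1, by omega⟩
  refine hnot k hj ?_
  simpa using hle _ (hmem𝓛 k (by omega)) (by simpa using hsub k i (by omega) (by omega))

theorem childRel_map_fst {X : Type*} (𝓛 : Set (Set X)) (a b : List (X × Set X))
    (hab : childRel {p | IsProdSeq 𝓛 p} a b) :
    childRel {t | IsBadSeq (qoRel 𝓛) t} (a.map Prod.fst) (b.map Prod.fst) := by
  obtain ⟨ha, y, rfl⟩ := hab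
  exact ⟨ha.isBadSeq_map_fst, y.1, by simp⟩

theorem finiteElasticity_of_isWqo {X : Type*} {𝓛 : Set (Set X)} (hwqo : IsWqo (qoRel 𝓛)) :
    FiniteElasticity 𝓛 := by
  rintro ⟨t, L, hL, hsub, hnot⟩
  refine hwqo ⟨t, fun i j hij hle => ?_⟩
  obtain ⟨k, rfl⟩ : ∃ k, j = k + 1 := ⟨j - 1, by omega⟩
  exact hnot k (hle (L k) (hL k) (hsub k i (by omega)))

theorem stmt14 {X : Type*} (𝓛 : Set (Set X)) (hwqo : IsWqo (qoRel 𝓛)) :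
    FiniteElasticity 𝓛 ∧
    Acc (childRel {p : List (X × Set X) | IsProdSeq 𝓛 p}) [] ∧
    Acc (childRel {t : List X | IsBadSeq (qoRel 𝓛) t}) [] ∧
    ∀ (h₁ : Acc (childRel {p : List (X × Set X) | IsProdSeq 𝓛 p}) [])
      (h₂ : Acc (childRel {t : List X | IsBadSeq (qoRel 𝓛) t}) []),
      h₁.rank ≤ h₂.rank := by
  have hbad := acc_childRel_isBadSeq_of_isWqo hwqo
  exact ⟨finiteElasticity_of_isWqo hwqo, Acc.of_map (childRel_map_fst 𝓛) (a := []) hbad, hbad,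
    fun h₁ h₂ => Acc.rank_le_of_map (childRel_map_fst 𝓛) h₁ h₂⟩
end

section
/- The converse of 'qo(L) is a wqo implies L has finite elasticity' fails: the set system of singletons {{n} : n ∈ ℕ} has dimension 1 (hence finite elasticity), but its induced quasi-order is equality on ℕ, which has an infinite bad sequence and thus is not a wqo. -/
/-- The set system of singletons over ℕ. -/
def SGL : Set (Set ℕ) := {S : Set ℕ | ∃ n : ℕ, S = {n}}

/-!
A production sequence of length two would need `t₀, t₁ ∈ L₁` with `t₀ ∈ L₀` and `t₁ ∉ L₀`, so `L₁`
has two distinct points; over a system of subsingletons, such as the singletons, the production tree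
therefore has depth one and no infinite elasticity exists. On the other hand every point has its own
singleton, so `x ≼ y` forces `x = y`, and any injective sequence is bad.
-/

theorem Acc.rank_eq_zero_of_forall_not_rel {α : Type*} {r : α → α → Prop} {a : α} (h : Acc r a)
    (ha : ∀ b, ¬ r b a) : h.rank = 0 := by
  rw [Acc.rank_eq]
  have : IsEmpty { b // r b a } := ⟨fun b => ha b.1 b.2⟩
  exact ciSup_of_empty _

section ChildRel

variable {A : Type*} {T : Set (List A)}

theorem not_childRel_of_length_le_one (hT : ∀ p ∈ T, p.length ≤ 1) {a b : List A}
    (ha : a ≠ []) : ¬ childRel T b a := by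
  rintro ⟨hbT, x, rfl⟩
  have := hT _ hbT
  simp only [List.length_append, List.length_singleton] at this
  exact ha (List.length_eq_zero_iff.mp (by omega))

theorem rank_nil_eq_one_of_length_le_one (hT : ∀ p ∈ T, p.length ≤ 1) {x : A} (hx : [x] ∈ T)
    (h : Acc (childRel T) []) : h.rank = 1 := by
  apply le_antisymm
  · rw [Acc.rank_eq]
    refine Ordinal.iSup_le fun ⟨b, hb⟩ => ?_
    obtain ⟨-, y, rfl⟩ := hb
    rw [Acc.rank_eq_zero_of_forall_not_rel _
      fun c => not_childRel_of_length_le_one hT (by simp), Order.succ_eq_add_one, zero_add]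
  · exact Order.one_le_iff_pos.mpr (zero_le.trans_lt (h.rank_lt_of_rel ⟨hx, x, rfl⟩))

end ChildRel

section SetSystem

variable {X : Type*} {𝓛 : Set (Set X)}

theorem IsProdSeq.singleton {t : X} {L : Set X} (hL : L ∈ 𝓛) (ht : t ∈ L) :
    IsProdSeq 𝓛 [(t, L)] := by
  refine ⟨fun i hi => ?_, fun i j hi hj => ?_, fun i hi => ?_⟩
  · obtain rfl : i = 0 := by simpa using hi
    exact hL
  · obtain rfl : i = 0 := by simpa using hi
    obtain rfl : j = 0 := by omega
    exact ht
  · simp at hi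

theorem IsProdSeq.length_le_one (h𝓛 : ∀ L ∈ 𝓛, L.Subsingleton) {p : List (X × Set X)}
    (hp : IsProdSeq 𝓛 p) : p.length ≤ 1 := by
  by_contra! hlen
  obtain ⟨hmem, hsub, hnot⟩ := hp
  have h01 : (p.get ⟨0, by omega⟩).1 = (p.get ⟨1, hlen⟩).1 :=
    h𝓛 _ (hmem 1 hlen) (hsub 1 0 hlen (by omega)) (hsub 1 1 hlen le_rfl)
  exact hnot 0 hlen (h01 ▸ hsub 0 0 (by omega) le_rfl)

theorem finiteElasticity_of_subsingleton (h𝓛 : ∀ L ∈ 𝓛, L.Subsingleton) :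
    FiniteElasticity 𝓛 := by
  rintro ⟨t, L, hmem, hsub, hnot⟩
  have h01 : t 0 = t 1 := h𝓛 _ (hmem 1) (hsub 1 0 (by omega)) (hsub 1 1 le_rfl)
  exact hnot 0 (h01 ▸ hsub 0 0 le_rfl)

theorem qoRel_iff_eq_of_singleton_mem (h𝓛 : ∀ x, ({x} : Set X) ∈ 𝓛) {x y : X} :
    qoRel 𝓛 x y ↔ x = y :=
  ⟨fun h => (h {x} (h𝓛 x) rfl).symm, fun hxy _ _ hx => hxy ▸ hx⟩

end SetSystem

theorem subsingleton_of_mem_SGL : ∀ L ∈ SGL, L.Subsingleton := by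
  rintro _ ⟨n, rfl⟩
  exact Set.subsingleton_singleton

theorem singleton_mem_SGL (n : ℕ) : ({n} : Set ℕ) ∈ SGL := ⟨n, rfl⟩

theorem stmt15 :
    FiniteElasticity SGL ∧
    (∀ h : Acc (childRel {p : List (ℕ × Set ℕ) | IsProdSeq SGL p}) [], h.rank = 1) ∧
    (∀ x y : ℕ, qoRel SGL x y ↔ x = y) ∧
    (∃ t : ℕ → ℕ, ∀ i j : ℕ, i < j → ¬ qoRel SGL (t i) (t j)) := by
  have hqo (x y : ℕ) : qoRel SGL x y ↔ x = y := qoRel_iff_eq_of_singleton_mem singleton_mem_SGL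
  refine ⟨finiteElasticity_of_subsingleton subsingleton_of_mem_SGL, ?_, hqo, ?_⟩
  · exact rank_nil_eq_one_of_length_le_one
      (fun _ hp => IsProdSeq.length_le_one subsingleton_of_mem_SGL hp)
      (IsProdSeq.singleton (singleton_mem_SGL 0) rfl)
  · exact ⟨id, fun i j hij => (hqo i j).not.mpr hij.ne⟩
end

section
/- If X is a well-quasi-order with ss(X) ≠ {∅, X}, then the complete lattice ss(X) of upper-closed subsets of X is coatomic: every upper-closed proper subset C_0 ⊊ X is contained in a coatom (a maximal element among proper upper-closed subsets). -/
theorem stmt16 {X : Type*} (r : X → X → Prop)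
    (hrefl : ∀ x, r x x) (htrans : ∀ x y z, r x y → r y z → r x z)
    (hwqo : IsWqo r)
    (hne : {L : Set X | UpperClosed r L} ≠ {∅, Set.univ}) :
    ∀ C₀ : Set X, UpperClosed r C₀ → C₀ ≠ Set.univ →
      ∃ C : Set X, UpperClosed r C ∧ C ≠ Set.univ ∧ C₀ ⊆ C ∧
        ∀ c : Set X, UpperClosed r c → c ≠ Set.univ → (c ∪ C = Set.univ ∨ c ⊆ C) := by
  intro C₀ hC₀ hC₀ne
  by_contra h
  push_neg at h
  -- From the negation, every proper upper-closed set containing C₀ can be strictly extended.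
  have step : ∀ C : Set X, UpperClosed r C → C ≠ Set.univ → C₀ ⊆ C →
      ∃ C' : Set X, UpperClosed r C' ∧ C' ≠ Set.univ ∧ C₀ ⊆ C' ∧ C ⊂ C' := by
    intro C hC hCne hsub
    obtain ⟨c, hc, hcne, hcC⟩ := h C hC hCne hsub
    refine ⟨c ∪ C, ?_, hcC.1, hsub.trans Set.subset_union_right, ?_⟩
    · intro x y hx hxy
      rcases hx with hx | hx
      · exact Or.inl (hc hx hxy)
      · exact Or.inr (hC hx hxy)
    · constructor
      · exact Set.subset_union_right
      · intro hle
        exact hcC.2 fun x hx => hle (Or.inl hx)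
  -- Build a strictly increasing sequence of proper upper-closed sets.
  let S := {C : Set X // UpperClosed r C ∧ C ≠ Set.univ ∧ C₀ ⊆ C}
  have stepS : ∀ s : S, ∃ s' : S, s.1 ⊂ s'.1 := by
    rintro ⟨C, hC, hne', hsub⟩
    obtain ⟨C', h1, h2, h3, h4⟩ := step C hC hne' hsub
    exact ⟨⟨C', h1, h2, h3⟩, h4⟩
  choose f hf using stepS
  let g : ℕ → S := fun n => f^[n] ⟨C₀, hC₀, hC₀ne, subset_rfl⟩
  have hg : ∀ n, (g n).1 ⊂ (g (n+1)).1 := by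
    intro n
    have : g (n+1) = f (g n) := Function.iterate_succ_apply' f n _
    rw [this]
    exact hf (g n)
  have hmono : ∀ i j, i ≤ j → (g i).1 ⊆ (g j).1 := by
    intro i j hij
    induction j with
    | zero => simp_all
    | succ k ih =>
      rcases Nat.lt_or_ge i (k+1) with hk | hk
      · exact (ih (Nat.lt_succ_iff.mp hk)).trans (hg k).subset
      · have : i = k + 1 := le_antisymm hij hk
        subst this; rfl
  -- Pick witnesses of strictness.
  have hpick : ∀ n, ∃ x, x ∈ (g (n+1)).1 ∧ x ∉ (g n).1 := by
    intro n
    obtain ⟨x, hx1, hx2⟩ := Set.exists_of_ssubset (hg n)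
    exact ⟨x, hx1, hx2⟩
  choose t ht1 ht2 using hpick
  apply hwqo
  refine ⟨t, fun i j hij hrij => ?_⟩
  have hti : t i ∈ (g j).1 := hmono (i+1) j hij (ht1 i)
  exact ht2 j ((g j).2.1 hti hrij)
end

section
/- For any surjective order-homomorphism f from a quasi-order X onto a linear order Y (a linearization of X), otp(Y) ≤ otp(X). -/
universe u

theorem auxRank {α β : Type u} {c : α → α → Prop} {d : β → β → Prop} (g : α → β)
    (h : ∀ ⦃a a'⦄, c a' a → d (g a') (g a)) :
    ∀ {b : β} (hb : Acc d b) (a : α), g a = b → ∃ ha : Acc c a, ha.rank ≤ hb.rank := by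
  intro b hb
  induction hb with
  | intro b hb ih =>
    intro a hga
    subst hga
    have ha : Acc c a := Acc.intro a fun a' hca' => ((ih _ (h hca') a' rfl).choose)
    refine ⟨ha, ?_⟩
    rw [ha.rank_eq, (Acc.intro (g a) hb).rank_eq]
    apply Ordinal.iSup_le
    rintro ⟨a', ha'⟩
    have := ih _ (h ha') a' rfl
    obtain ⟨hacc, hle⟩ := this
    calc Order.succ (ha.inv ha').rank
        = Order.succ hacc.rank := by rw [Subsingleton.elim (ha.inv ha') hacc]
      _ ≤ Order.succ ((Acc.intro (g a) hb).inv (h ha')).rank := by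
          simpa using hle.trans_eq (congrArg Acc.rank (Subsingleton.elim _ _))
      _ ≤ _ := Ordinal.le_iSup (fun y : {y // d y (g a)} => Order.succ ((Acc.intro (g a) hb).inv y.2).rank) ⟨g a', h ha'⟩


theorem stmt18 {X Y : Type u} (r : X → X → Prop) (s : Y → Y → Prop)
    (hrrefl : ∀ x, r x x) (hrtrans : ∀ x y z, r x y → r y z → r x z)
    (hsrefl : ∀ y, s y y) (hstrans : ∀ x y z, s x y → s y z → s x z)
    (hstotal : ∀ x y : Y, s x y ∨ s y x)
    (hsantisymm : ∀ x y : Y, s x y → s y x → x = y)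
    (f : X → Y) (hsurj : Function.Surjective f)
    (hhom : ∀ x x', r x x' → s (f x) (f x')) :
    ∀ hX : Acc (childRel {t : List X | IsBadSeq r t}) [],
      ∃ hY : Acc (childRel {t : List Y | IsBadSeq s t}) [],
        hY.rank ≤ hX.rank := by

  intro hX
  classical
  set g0 : Y → X := fun y => (hsurj y).choose with hg0
  have hfg : ∀ y, f (g0 y) = y := fun y => (hsurj y).choose_spec
  set g : List Y → List X := List.map g0 with hg
  have hbad : ∀ t : List Y, IsBadSeq s t → IsBadSeq r (g t) := by
    intro t ht
    unfold IsBadSeq at *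
    rw [hg, List.pairwise_map]
    refine ht.imp ?_
    intro a b hab hr
    exact hab (by simpa [hfg] using hhom _ _ hr)
  have hstep : ∀ ⦃a a' : List Y⦄, childRel {t : List Y | IsBadSeq s t} a' a →
      childRel {t : List X | IsBadSeq r t} (g a') (g a) := by
    rintro a a' ⟨hmem, x, rfl⟩
    exact ⟨hbad _ hmem, g0 x, by simp [hg]⟩
  exact auxRank g hstep hX [] rfl
end
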